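/- Let G be a simple graph, S a set of vertices of G, X a set of vertices of G, and A_1, …, A_{d'} subsets of X ∖ S. Let Ĝ be the graph obtained from the induced subgraph G[X] by adding d' new vertices w_1, …, w_{d'}, where each w_i is adjacent exactly to the vertices of A_i, and suppose that no cycle of Ĝ contains a vertex of S. Let W be a set of vertices of G such that (a) X is exactly the set of vertices of W that belong to S ∩ W or have a G-neighbor in S ∩ W, and (b) there is an injective assignment of the connected components of G[W ∖ X] to indices in {1, …, d'} such that every vertex v of a component assigned index i satisfies N_G(v) ∩ X ⊆ A_i. Then W is an S-forest of G. -/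

import Mathlib

/-!
Suppose a cycle of `G[W]` passes through `v ∈ S`, and let `t` be a neighbour of `v` on it; both
`v` and `t` lie in `X`. Contracting each component of `G[W ∖ X]` to its assigned vertex `w_i`
maps every edge of `G[W]` to an edge of `Ĝ` or to a single vertex (this is where the condition
`N(x) ∩ X ⊆ A_i` enters), and is injective on `X`. So the `v`–`t` path left after deleting the
edge `vt` from the cycle becomes a `v`–`t` walk in `Ĝ` avoiding `vt`, which closes up to a
cycle of `Ĝ` through `v`.
-/

/-- `W` is an `S`-forest of `G`: no cycle of the induced subgraph `G[W]`
contains a vertex of `S`. -/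
def SForest {V : Type*} (G : SimpleGraph V) (S W : Set V) : Prop :=
  ∀ (u : W) (c : (G.induce W).Walk u u), c.IsCycle → ∀ v ∈ c.support, (v : V) ∉ S

/-- The set `S_{≤1}` of vertices of `W` that belong to `S ∩ W` or have a `G`-neighbor
in `S ∩ W`. -/
def sle1 {V : Type*} (G : SimpleGraph V) (S W : Set V) : Set V :=
  {v | v ∈ W ∧ (v ∈ S ∩ W ∨ ∃ u ∈ S ∩ W, G.Adj v u)}

/-- The graph `Ĝ` obtained from the induced subgraph `G[X]` by adding `d'` new vertices
`w_1, …, w_{d'}`, where `w_i` is adjacent exactly to the vertices of `A i`. -/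
def hatGraph {V : Type*} (G : SimpleGraph V) (X : Set V) {d' : ℕ} (A : Fin d' → Set V) :
    SimpleGraph (↥X ⊕ Fin d') :=
  SimpleGraph.fromRel fun a b =>
    match a, b with
    | Sum.inl u, Sum.inl v => G.Adj (u : V) (v : V)
    | Sum.inl u, Sum.inr i => (u : V) ∈ A i
    | _, _ => False

namespace SimpleGraph

variable {α β : Type*} {G : SimpleGraph α} {H : SimpleGraph β}

theorem Reachable.map_of_adj_or_eq (φ : α → β)
    (hφ : ∀ a b, G.Adj a b → H.Adj (φ a) (φ b) ∨ φ a = φ b) {u v : α} (h : G.Reachable u v) :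
    H.Reachable (φ u) (φ v) := by
  rw [reachable_iff_reflTransGen] at h ⊢
  refine h.lift' φ fun a b hab => ?_
  rcases hφ a b hab with hadj | heq
  · exact .single hadj
  · rw [Function.onFun, heq]

/-- An edge lies on a cycle iff its endpoints stay connected once it is deleted, and `φ` carries
that connection over because `s(u, v)` is the only pair lying over `s(φ u, φ v)`. -/
theorem exists_isCycle_of_adj_or_eq (φ : α → β)
    (hφ : ∀ a b, G.Adj a b → H.Adj (φ a) (φ b) ∨ φ a = φ b) {u v : α}
    (hfiber : ∀ a b, s(φ a, φ b) = s(φ u, φ v) → s(a, b) = s(u, v))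
    {w : α} {c : G.Walk w w} (hc : c.IsCycle) (huv : s(u, v) ∈ c.edges) :
    ∃ (x : β) (c' : H.Walk x x), c'.IsCycle ∧ φ u ∈ c'.support := by
  obtain ⟨hadj, hreach⟩ := adj_and_reachable_delete_edges_iff_exists_cycle.mpr ⟨w, c, hc, huv⟩
  have hne : φ u ≠ φ v := fun h => hadj.ne (by simpa using hfiber u u (by rw [h]))
  have hadj' : H.Adj (φ u) (φ v) := (hφ u v hadj).resolve_right hne
  have hreach' : (H.deleteEdges {s(φ u, φ v)}).Reachable (φ u) (φ v) := by
    refine hreach.map_of_adj_or_eq φ fun a b hab => ?_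
    rw [deleteEdges_adj, Set.mem_singleton_iff] at hab
    refine (hφ a b hab.1).imp_left fun h => ?_
    rw [deleteEdges_adj, Set.mem_singleton_iff]
    exact ⟨h, mt (hfiber a b) hab.2⟩
  obtain ⟨x, c', hc', he⟩ := adj_and_reachable_delete_edges_iff_exists_cycle.mp ⟨hadj', hreach'⟩
  exact ⟨x, c', hc', c'.fst_mem_support_of_mem_edges he⟩

end SimpleGraph

section HatGraph

variable {V : Type*} {G : SimpleGraph V} {X : Set V} {d' : ℕ} {A : Fin d' → Set V}

@[simp] lemma hatGraph_adj_inl_inl {u v : X} :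
    (hatGraph G X A).Adj (.inl u) (.inl v) ↔ G.Adj u v := by
  simp only [hatGraph, SimpleGraph.fromRel_adj, ne_eq, Sum.inl.injEq, G.adj_comm v, or_self]
  exact ⟨And.right, fun h => ⟨fun huv => h.ne (congrArg Subtype.val huv), h⟩⟩

@[simp] lemma hatGraph_adj_inl_inr {u : X} {i : Fin d'} :
    (hatGraph G X A).Adj (.inl u) (.inr i) ↔ (u : V) ∈ A i := by
  simp [hatGraph]

end HatGraph

section Collapse

variable {V : Type*} (G : SimpleGraph V) (X W : Set V) {d' : ℕ}
  (f : (G.induce (W \ X)).ConnectedComponent → Fin d')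

/-- Contract every component of `G[W ∖ X]` onto the new vertex `w_i` it is assigned to. -/
noncomputable def collapseToHat (a : W) : X ⊕ Fin d' :=
  open Classical in
  if ha : (a : V) ∈ X then .inl ⟨a, ha⟩
  else .inr (f ((G.induce (W \ X)).connectedComponentMk ⟨a, a.2, ha⟩))

variable {G X W f}

lemma collapseToHat_of_mem {a : W} (ha : (a : V) ∈ X) :
    collapseToHat G X W f a = .inl ⟨a, ha⟩ :=
  dif_pos ha

lemma collapseToHat_of_not_mem {a : W} (ha : (a : V) ∉ X) :
    collapseToHat G X W f a = .inr (f ((G.induce (W \ X)).connectedComponentMk ⟨a, a.2, ha⟩)) :=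
  dif_neg ha

lemma eq_of_collapseToHat_eq_of_mem {a b : W} (hb : (b : V) ∈ X)
    (h : collapseToHat G X W f a = collapseToHat G X W f b) : a = b := by
  rw [collapseToHat_of_mem hb] at h
  by_cases ha : (a : V) ∈ X
  · rw [collapseToHat_of_mem ha, Sum.inl.injEq, Subtype.mk.injEq] at h
    exact Subtype.ext h
  · simp [collapseToHat_of_not_mem ha] at h

lemma collapseToHat_sym2_eq {a b v t : W} (hv : (v : V) ∈ X) (ht : (t : V) ∈ X)
    (h : s(collapseToHat G X W f a, collapseToHat G X W f b) =
      s(collapseToHat G X W f v, collapseToHat G X W f t)) : s(a, b) = s(v, t) := by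
  rcases Sym2.eq_iff.mp h with ⟨hav, hbt⟩ | ⟨hat, hbv⟩
  · rw [eq_of_collapseToHat_eq_of_mem hv hav, eq_of_collapseToHat_eq_of_mem ht hbt]
  · rw [eq_of_collapseToHat_eq_of_mem ht hat, eq_of_collapseToHat_eq_of_mem hv hbv, Sym2.eq_swap]

lemma collapseToHat_adj_or_eq {A : Fin d' → Set V}
    (hcut : ∀ (v : ↥(W \ X)) (u : V), u ∈ X → G.Adj (v : V) u →
      u ∈ A (f ((G.induce (W \ X)).connectedComponentMk v)))
    (a b : W) (hab : (G.induce W).Adj a b) :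
    (hatGraph G X A).Adj (collapseToHat G X W f a) (collapseToHat G X W f b) ∨
      collapseToHat G X W f a = collapseToHat G X W f b := by
  have hab : G.Adj a b := hab
  by_cases ha : (a : V) ∈ X <;> by_cases hb : (b : V) ∈ X
  · simp [collapseToHat_of_mem ha, collapseToHat_of_mem hb, hab]
  · simp [collapseToHat_of_mem ha, collapseToHat_of_not_mem hb, hcut ⟨b, b.2, hb⟩ a ha hab.symm]
  · simp [collapseToHat_of_not_mem ha, collapseToHat_of_mem hb,
      SimpleGraph.adj_comm (hatGraph G X A) (.inr _), hcut ⟨a, a.2, ha⟩ b hb hab]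
  · right
    have hab' : (G.induce (W \ X)).Adj ⟨a, a.2, ha⟩ ⟨b, b.2, hb⟩ := hab
    rw [collapseToHat_of_not_mem ha, collapseToHat_of_not_mem hb,
      SimpleGraph.ConnectedComponent.sound hab'.reachable]

end Collapse

theorem stmt5_general {V : Type*} (G : SimpleGraph V) (S X : Set V) {d' : ℕ} (A : Fin d' → Set V)
    (hhat : ∀ (a) (c : (hatGraph G X A).Walk a a), c.IsCycle →
      ∀ b ∈ c.support, ∀ u : ↥X, b = Sum.inl u → (u : V) ∉ S)
    (W : Set V)
    (haX : X = sle1 G S W)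
    (f : (G.induce (W \ X)).ConnectedComponent → Fin d')
    (hcut : ∀ (v : ↥(W \ X)) (u : V), u ∈ X → G.Adj (v : V) u →
      u ∈ A (f ((G.induce (W \ X)).connectedComponentMk v))) :
    SForest G S W := by
  intro u c hc v hv hvS
  obtain ⟨e, he, hve⟩ := (c.mem_support_iff_exists_mem_edges_of_not_nil hc.not_nil).mp hv
  obtain ⟨t, rfl⟩ := Sym2.mem_iff_exists.mp hve
  have hvX : (v : V) ∈ X := haX ▸ ⟨v.2, .inl ⟨hvS, v.2⟩⟩
  have htX : (t : V) ∈ X := haX ▸ ⟨t.2, .inr ⟨v, ⟨hvS, v.2⟩, (c.adj_of_mem_edges he).symm⟩⟩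
  obtain ⟨x, c', hc', hvc'⟩ := SimpleGraph.exists_isCycle_of_adj_or_eq (collapseToHat G X W f)
    (collapseToHat_adj_or_eq hcut) (fun _ _ => collapseToHat_sym2_eq hvX htX) hc he
  exact hhat x c' hc' _ hvc' ⟨v, hvX⟩ (collapseToHat_of_mem hvX) hvS

/-- If `A_1, …, A_{d'} ⊆ X ∖ S`, the graph `Ĝ` built from `G[X]` by adding
vertices `w_i` adjacent exactly to `A_i` has no cycle through a vertex of `S`, and `W` is a
vertex set whose distance-at-most-one part (w.r.t. `S`) is exactly `X` and whose components of
`G[W ∖ X]` can be injectively assigned indices `i` so that every vertex of a component assigned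
`i` has all its `G`-neighbors in `X` inside `A_i`, then `W` is an `S`-forest of `G`. -/
theorem stmt5 {V : Type*} (G : SimpleGraph V) (S X : Set V) {d' : ℕ} (A : Fin d' → Set V)
    (hA : ∀ i, A i ⊆ X \ S)
    (hhat : ∀ (a) (c : (hatGraph G X A).Walk a a), c.IsCycle →
      ∀ b ∈ c.support, ∀ u : ↥X, b = Sum.inl u → (u : V) ∉ S)
    (W : Set V)
    (haX : X = sle1 G S W)
    (f : (G.induce (W \ X)).ConnectedComponent → Fin d')
    (hf : Function.Injective f)
    (hcut : ∀ (v : ↥(W \ X)) (u : V), u ∈ X → G.Adj (v : V) u →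
      u ∈ A (f ((G.induce (W \ X)).connectedComponentMk v))) :
    SForest G S W :=
  stmt5_general G S X A hhat W haX f hcut
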